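/- For the operator (Kh)(v) = (|S^{N−3}|/|S^{N−2}|) ∫_{−1}^1 h(√(N−v²) s)(1−s²)^{(N−4)/2} ds, the polynomials v² − 1 and the degree-4 polynomial eigenfunction have eigenvalues α₂ = −1/(N−1) and α₄ = 3/(N²−1) respectively; more precisely K(v²−1) = −(1/(N−1))(v²−1). -/

import Mathlib

/-!
Substituting `x = √(N - v²) s`, `K` sends `x^{2j}` to `(N - v²)^j` times the normalised moment
`c_N M_{2j}`, where `c_N = |S^{N-3}|/|S^{N-2}|`, `M_k = ∫_{-1}^1 s^k (1 - s²)^p ds` and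
`p = (N - 4)/2`. Integrating `d/ds [s^{k+1} (1 - s²)^{p+1}]` over `[-1, 1]` gives the recursion
`(2p + k + 3) M_{k+2} = (k + 1) M_k`, and `c_N M_0 = 1` because `M_0 = B(1/2, p + 1)` matches the
Gamma quotient in `c_N`. Hence the normalised moments are `1`, `1/(N-1)` and `3/((N-1)(N+1))`, so
`K` preserves even quartics and acts on them by an explicit triangular matrix whose eigenvectors
are read off.
-/

open MeasureTheory

/-- The surface area `|S^m| = 2 π^{(m+1)/2} / Γ((m+1)/2)` of the unit `m`-sphere. -/
noncomputable def unitSphereArea (m : ℕ) : ℝ :=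
  2 * Real.pi ^ (((m : ℝ) + 1) / 2) / Real.Gamma (((m : ℝ) + 1) / 2)

/-- The correlation operator `K`:
`(Kh)(v) = (|S^{N-3}|/|S^{N-2}|) ∫_{-1}^1 h(√(N-v²)s)(1-s²)^{(N-4)/2} ds`. -/
noncomputable def kacK (N : ℕ) (h : ℝ → ℝ) (v : ℝ) : ℝ :=
  (unitSphereArea (N - 3) / unitSphereArea (N - 2)) *
    ∫ s in (-1 : ℝ)..1,
      h (Real.sqrt ((N : ℝ) - v ^ 2) * s) * (1 - s ^ 2) ^ (((N : ℝ) - 4) / 2)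

open Real intervalIntegral

namespace KacK

noncomputable def weightedMoment (k : ℕ) (p : ℝ) : ℝ :=
  ∫ s in (-1 : ℝ)..1, s ^ k * (1 - s ^ 2) ^ p

variable {p : ℝ}

theorem continuous_one_sub_sq_rpow (hp : 0 ≤ p) : Continuous fun s : ℝ => (1 - s ^ 2) ^ p :=
  continuous_iff_continuousAt.2 fun _ =>
    (continuousAt_rpow_const _ _ (Or.inr hp)).comp (by fun_prop)

theorem intervalIntegrable_pow_mul_one_sub_sq_rpow (hp : 0 ≤ p) (k : ℕ) :
    IntervalIntegrable (fun s : ℝ => s ^ k * (1 - s ^ 2) ^ p) volume (-1) 1 :=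
  ((continuous_pow k).mul (continuous_one_sub_sq_rpow hp)).intervalIntegrable _ _

theorem hasDerivAt_one_sub_sq_rpow (hp : 1 ≤ p) (s : ℝ) :
    HasDerivAt (fun s : ℝ => (1 - s ^ 2) ^ p) (-(2 * p * s * (1 - s ^ 2) ^ (p - 1))) s := by
  convert ((hasDerivAt_pow 2 s).const_sub 1).rpow_const (Or.inr hp) using 1
  push_cast
  ring

theorem weightedMoment_add_one (hp : 0 ≤ p) (k : ℕ) :
    weightedMoment k (p + 1) = weightedMoment k p - weightedMoment (k + 2) p := by
  have h (s : ℝ) : s ^ k * (1 - s ^ 2) ^ (p + 1)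
      = s ^ k * (1 - s ^ 2) ^ p - s ^ (k + 2) * (1 - s ^ 2) ^ p := by
    have hpow (x : ℝ) : x ^ (p + 1) = x ^ p * x := by
      rcases eq_or_ne x 0 with rfl | hx
      · rw [zero_rpow (by linarith), mul_zero]
      · exact rpow_add_one hx p
    rw [hpow]; ring
  simp only [weightedMoment, h]
  exact integral_sub (intervalIntegrable_pow_mul_one_sub_sq_rpow hp k)
    (intervalIntegrable_pow_mul_one_sub_sq_rpow hp (k + 2))

theorem weightedMoment_integration_by_parts (hp : 0 ≤ p) (k : ℕ) :
    (k + 1) * weightedMoment k (p + 1) = 2 * (p + 1) * weightedMoment (k + 2) p := by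
  have hderiv (s : ℝ) : HasDerivAt (fun s : ℝ => s ^ (k + 1) * (1 - s ^ 2) ^ (p + 1))
      ((k + 1) * (s ^ k * (1 - s ^ 2) ^ (p + 1))
        - 2 * (p + 1) * (s ^ (k + 2) * (1 - s ^ 2) ^ p)) s := by
    refine ((hasDerivAt_pow (k + 1) s).mul
      (hasDerivAt_one_sub_sq_rpow (p := p + 1) (by linarith) s)).congr_deriv ?_
    rw [add_sub_cancel_right]
    push_cast
    ring
  have hint₁ := (intervalIntegrable_pow_mul_one_sub_sq_rpow (p := p + 1) (by linarith) k).const_mul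
    ((k : ℝ) + 1)
  have hint₂ := (intervalIntegrable_pow_mul_one_sub_sq_rpow hp (k + 2)).const_mul (2 * (p + 1))
  have hftc := integral_eq_sub_of_hasDerivAt (fun s _ => hderiv s) (hint₁.sub hint₂)
  rw [integral_sub hint₁ hint₂, intervalIntegral.integral_const_mul,
    intervalIntegral.integral_const_mul] at hftc
  norm_num [zero_rpow (by linarith : p + 1 ≠ 0)] at hftc
  rw [weightedMoment, weightedMoment]
  linarith

theorem weightedMoment_add_two (hp : 0 ≤ p) (k : ℕ) :
    (2 * p + k + 3) * weightedMoment (k + 2) p = (k + 1) * weightedMoment k p := by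
  have h := weightedMoment_integration_by_parts hp k
  rw [weightedMoment_add_one hp] at h
  linarith

theorem weightedMoment_zero_add_one (hp : 0 ≤ p) :
    (2 * p + 3) * weightedMoment 0 (p + 1) = (2 * p + 2) * weightedMoment 0 p := by
  have h := weightedMoment_add_two hp 0
  norm_num at h
  rw [weightedMoment_add_one hp, zero_add]
  linear_combination -h

theorem weightedMoment_zero_zero : weightedMoment 0 0 = 2 := by
  norm_num [weightedMoment]

theorem weightedMoment_zero_one_half : weightedMoment 0 (1 / 2) = π / 2 := by
  simp only [weightedMoment, pow_zero, one_mul, ← sqrt_eq_rpow]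
  exact integral_sqrt_one_sub_sq

theorem Gamma_three_halves : Gamma (3 / 2) = √π / 2 := by
  rw [show (3 / 2 : ℝ) = 1 / 2 + 1 by norm_num, Gamma_add_one (by norm_num), Gamma_one_half_eq]
  ring

/-- `weightedMoment 0 p` is the Beta integral `B(1/2, p + 1)`; the recursion in `p` reaches every
half-integer from `p = 0` and `p = 1/2`. -/
theorem weightedMoment_zero_half_nat (m : ℕ) :
    weightedMoment 0 (m / 2) = √π * Gamma (m / 2 + 1) / Gamma (m / 2 + 3 / 2) := by
  induction m using Nat.twoStepInduction with
  | zero =>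
    norm_num [weightedMoment_zero_zero, Gamma_three_halves]
    field_simp
  | one =>
    norm_num [weightedMoment_zero_one_half, Gamma_three_halves]
    field_simp
    rw [sq_sqrt pi_pos.le]
  | more m ih _ =>
    have hx : (0 : ℝ) ≤ m / 2 := by positivity
    have hrec := weightedMoment_zero_add_one hx
    rw [ih] at hrec
    rw [show ((m + 2 : ℕ) : ℝ) / 2 = m / 2 + 1 by push_cast; ring,
      show (m : ℝ) / 2 + 1 + 3 / 2 = (m / 2 + 3 / 2) + 1 by ring]
    generalize (m : ℝ) / 2 = x at hx hrec ⊢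
    have hΓ := (Gamma_pos_of_pos (by positivity : 0 < x + 3 / 2)).ne'
    rw [mul_div_assoc', eq_div_iff hΓ] at hrec
    rw [Gamma_add_one (by positivity : x + 1 ≠ 0), Gamma_add_one (by positivity : x + 3 / 2 ≠ 0),
      eq_div_iff (by positivity)]
    linear_combination hrec / 2

theorem unitSphereArea_succ_div_succ_succ (m : ℕ) :
    unitSphereArea (m + 1) / unitSphereArea (m + 2)
      = Gamma (m / 2 + 3 / 2) / (√π * Gamma (m / 2 + 1)) := by
  have hπ : π ^ ((m : ℝ) / 2 + 3 / 2) = π ^ ((m : ℝ) / 2 + 1) * √π := by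
    rw [sqrt_eq_rpow, ← rpow_add pi_pos]
    ring_nf
  simp only [unitSphereArea]
  push_cast
  rw [show ((m : ℝ) + 1 + 1) / 2 = m / 2 + 1 by ring,
    show ((m : ℝ) + 2 + 1) / 2 = m / 2 + 3 / 2 by ring, hπ]
  have : 0 < Gamma (m / 2 + 1) := Gamma_pos_of_pos (by positivity)
  have : 0 < Gamma (m / 2 + 3 / 2) := Gamma_pos_of_pos (by positivity)
  have : 0 < π ^ ((m : ℝ) / 2 + 1) := rpow_pos_of_pos pi_pos _
  field_simp

theorem unitSphereArea_div_mul_weightedMoment (m : ℕ) :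
    unitSphereArea (m + 1) / unitSphereArea (m + 2) * weightedMoment 0 (m / 2) = 1 := by
  rw [unitSphereArea_succ_div_succ_succ, weightedMoment_zero_half_nat]
  have : 0 < Gamma (m / 2 + 1) := Gamma_pos_of_pos (by positivity)
  have : 0 < Gamma (m / 2 + 3 / 2) := Gamma_pos_of_pos (by positivity)
  field_simp

theorem integral_even_quartic_mul_one_sub_sq_rpow (hp : 0 ≤ p) (r A B C : ℝ) :
    ∫ s in (-1 : ℝ)..1, (A * (r * s) ^ 4 + B * (r * s) ^ 2 + C) * (1 - s ^ 2) ^ p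
      = A * (r ^ 2) ^ 2 * weightedMoment 4 p + B * r ^ 2 * weightedMoment 2 p
        + C * weightedMoment 0 p := by
  have hint (k : ℕ) (a : ℝ) := (intervalIntegrable_pow_mul_one_sub_sq_rpow hp k).const_mul a
  have hexpand (s : ℝ) : (A * (r * s) ^ 4 + B * (r * s) ^ 2 + C) * (1 - s ^ 2) ^ p
      = A * (r ^ 2) ^ 2 * (s ^ 4 * (1 - s ^ 2) ^ p) + B * r ^ 2 * (s ^ 2 * (1 - s ^ 2) ^ p)
        + C * (s ^ 0 * (1 - s ^ 2) ^ p) := by ring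
  simp only [hexpand]
  rw [integral_add ((hint 4 _).add (hint 2 _)) (hint 0 _), integral_add (hint 4 _) (hint 2 _)]
  simp only [intervalIntegral.integral_const_mul, weightedMoment]

theorem kacK_even_quartic {N : ℕ} (hN : 4 ≤ N) (A B C : ℝ) {v : ℝ} (hv : v ^ 2 ≤ N) :
    kacK N (fun x => A * x ^ 4 + B * x ^ 2 + C) v
      = 3 * A * (N - v ^ 2) ^ 2 / ((N - 1) * (N + 1)) + B * (N - v ^ 2) / (N - 1) + C := by
  obtain ⟨m, rfl⟩ : ∃ m, N = m + 4 := ⟨N - 4, by omega⟩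
  have hp : (0 : ℝ) ≤ m / 2 := by positivity
  rw [kacK, show m + 4 - 3 = m + 1 from rfl, show m + 4 - 2 = m + 2 from rfl]
  push_cast at hv ⊢
  rw [show ((m : ℝ) + 4 - 4) / 2 = m / 2 by ring, integral_even_quartic_mul_one_sub_sq_rpow hp,
    sq_sqrt (by linarith), show (m : ℝ) + 4 - 1 = m + 3 by ring,
    show (m : ℝ) + 4 + 1 = m + 5 by ring]
  set c := unitSphereArea (m + 1) / unitSphereArea (m + 2)
  have hc₀ : c * weightedMoment 0 (m / 2) = 1 := unitSphereArea_div_mul_weightedMoment m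
  have h₂ := weightedMoment_add_two hp 0
  have h₄ := weightedMoment_add_two hp 2
  push_cast at h₂ h₄
  have hc₂ : c * weightedMoment 2 (m / 2) = 1 / (m + 3) := by
    rw [eq_div_iff (by positivity)]
    linear_combination c * h₂ + hc₀
  have hc₄ : c * weightedMoment 4 (m / 2) = 3 / ((m + 3) * (m + 5)) := by
    rw [eq_div_iff (by positivity)]
    linear_combination (m + 3) * c * h₄ + 3 * c * h₂ + 3 * hc₀
  linear_combination A * (m + 4 - v ^ 2) ^ 2 * hc₄ + B * (m + 4 - v ^ 2) * hc₂ + C * hc₀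

end KacK

open KacK in
/-- `v² - 1` is an eigenfunction of `K` with eigenvalue `α₂ = -1/(N-1)`, and there is a
(monic, even) degree-four polynomial eigenfunction with eigenvalue `α₄ = 3/(N²-1)`. -/
theorem kacK_eigenvalues (N : ℕ) (hN : 4 ≤ N) :
    (∀ v : ℝ, v ^ 2 ≤ (N : ℝ) →
      kacK N (fun x => x ^ 2 - 1) v = -(1 / ((N : ℝ) - 1)) * (v ^ 2 - 1)) ∧
    ∃ a b : ℝ, ∀ v : ℝ, v ^ 2 ≤ (N : ℝ) →
      kacK N (fun x => x ^ 4 + a * x ^ 2 + b) v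
        = (3 / ((N : ℝ) ^ 2 - 1)) * (v ^ 4 + a * v ^ 2 + b) := by
  have hN' : (4 : ℝ) ≤ N := by exact_mod_cast hN
  have : (N : ℝ) - 1 ≠ 0 := by linarith
  have : (N : ℝ) ^ 2 - 1 ≠ 0 := by nlinarith
  constructor
  · intro v hv
    have h := kacK_even_quartic hN 0 1 (-1) hv
    simp only [mul_zero, zero_mul, zero_div, zero_add, one_mul, ← sub_eq_add_neg] at h
    rw [h]
    field_simp
    ring
  -- `a` and `b` solve the two linear equations obtained by comparing the coefficients of `v²` and `1`.
  · refine ⟨-6 * N / (N + 4), 3 * N ^ 2 / ((N + 2) * (N + 4)), fun v hv => ?_⟩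
    have h := kacK_even_quartic hN 1 (-6 * N / (N + 4)) (3 * N ^ 2 / ((N + 2) * (N + 4))) hv
    simp only [one_mul, mul_one] at h
    rw [h]
    field_simp
    ring
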